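/- arXiv:2605.31076 — 4 statements merged into one kernel-verified Lean document; each statement's English description precedes it below -/
import Mathlib

section
/- For every nonzero ω ∈ ℝ³, the left Jacobian satisfies the Rodrigues-type closed form ∫₀¹ exp(s·hat(ω)) ds = I + ((1 − cos‖ω‖)/‖ω‖²)·hat(ω) + ((‖ω‖ − sin‖ω‖)/‖ω‖³)·hat(ω)², where ‖ω‖ is the Euclidean norm of ω. -/
/-!
Writing `θ = ‖ω‖` and `A = hat ω`, one has `A³ = -θ² A`. In any real Banach algebra this
relation makes `R t = 1 + (sin (tθ) / θ) A + ((1 - cos (tθ)) / θ²) A²` a solution of `R' = R A`,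
`R 0 = 1`; since `R t * exp (-t A)` then has zero derivative, `R t = exp (t A)` (Rodrigues'
formula). Integrating the two scalar coefficients over `[0, 1]` gives the closed form.
-/

open scoped Matrix
open NormedSpace

attribute [local instance] Matrix.frobeniusNormedAddCommGroup Matrix.frobeniusNormedSpace

/-- The hat map: `hat ω` is the skew-symmetric matrix with `hat ω *ᵥ x = ω × x`. -/
def hat (ω : EuclideanSpace ℝ (Fin 3)) : Matrix (Fin 3) (Fin 3) ℝ :=
  !![0, -ω 2, ω 1; ω 2, 0, -ω 0; -ω 1, ω 0, 0]

attribute [local instance] Matrix.frobeniusNormedRing Matrix.frobeniusNormedAlgebra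

open Real

section ExpOfCubeRelation

variable {𝔸 : Type*} [NormedRing 𝔸] [NormedAlgebra ℝ 𝔸] [CompleteSpace 𝔸]

theorem eq_exp_smul_of_hasDerivAt {R : ℝ → 𝔸} {A : 𝔸} (hR : ∀ t, HasDerivAt R (R t * A) t)
    (hR₀ : R 0 = 1) (t : ℝ) : R t = exp (t • A) := by
  have hderiv (u : ℝ) : HasDerivAt (fun u => R u * exp (u • -A)) 0 u := by
    have hcomm : exp (u • -A) * -A = -A * exp (u • -A) :=
      (((Commute.refl A).neg_left.smul_left u).exp_left.neg_right).eq
    refine ((hR u).mul (hasDerivAt_exp_smul_const (-A) u)).congr_deriv ?_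
    rw [hcomm, neg_mul, mul_neg, ← mul_assoc, add_neg_cancel]
  have hconst : R t * exp (t • -A) = 1 := by
    rw [is_const_of_deriv_eq_zero (fun u => (hderiv u).differentiableAt)
      (fun u => (hderiv u).deriv) t 0, hR₀, zero_smul, NormedSpace.exp_zero, one_mul]
  have hinv : exp (t • -A) * exp (t • A) = 1 := by
    have hball (x : 𝔸) : x ∈ Metric.eball 0 (expSeries ℝ 𝔸).radius :=
      (expSeries_radius_eq_top ℝ 𝔸).symm ▸ edist_lt_top _ _
    rw [← exp_add_of_commute_of_mem_ball ((Commute.refl A).neg_left.smul_left t |>.smul_right t)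
      (hball _) (hball _), smul_neg, neg_add_cancel, NormedSpace.exp_zero]
  calc R t = R t * exp (t • -A) * exp (t • A) := by rw [mul_assoc, hinv, mul_one]
    _ = exp (t • A) := by rw [hconst, one_mul]

variable {A : 𝔸} {θ : ℝ}

theorem exp_smul_eq_of_mul_mul_self_eq (hθ : θ ≠ 0) (hA : A * A * A = -θ ^ 2 • A) (t : ℝ) :
    exp (t • A) = 1 + (sin (t * θ) / θ) • A + ((1 - cos (t * θ)) / θ ^ 2) • (A * A) := by
  refine (eq_exp_smul_of_hasDerivAt
    (R := fun t => 1 + (sin (t * θ) / θ) • A + ((1 - cos (t * θ)) / θ ^ 2) • (A * A))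
    (fun t => ?_) (by simp) t).symm
  have hsin : HasDerivAt (fun u => sin (u * θ) / θ) (cos (t * θ)) t :=
    ((hasDerivAt_mul_const θ).sin.div_const θ).congr_deriv (mul_div_cancel_right₀ _ hθ)
  have hcos : HasDerivAt (fun u => (1 - cos (u * θ)) / θ ^ 2) (sin (t * θ) / θ) t :=
    (((hasDerivAt_mul_const θ).cos.const_sub 1).div_const (θ ^ 2)).congr_deriv (by field_simp)
  refine (((hsin.smul_const A).const_add 1).fun_add (hcos.smul_const (A * A))).congr_deriv ?_
  simp only [add_mul, one_mul, smul_mul_assoc, hA, smul_smul]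
  rw [div_mul_eq_mul_div, mul_neg, neg_div, mul_div_assoc, div_self (pow_ne_zero 2 hθ)]
  module

theorem integral_exp_smul_of_mul_mul_self_eq (hθ : θ ≠ 0) (hA : A * A * A = -θ ^ 2 • A) :
    ∫ s in (0 : ℝ)..1, exp (s • A) =
      1 + ((1 - cos θ) / θ ^ 2) • A + ((θ - sin θ) / θ ^ 3) • (A * A) := by
  have hsin : ∫ s in (0 : ℝ)..1, sin (s * θ) / θ = (1 - cos θ) / θ ^ 2 := by
    rw [intervalIntegral.integral_div, intervalIntegral.integral_comp_mul_right sin hθ]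
    simp only [zero_mul, one_mul, integral_sin, cos_zero, smul_eq_mul]
    field_simp
  have hcos : ∫ s in (0 : ℝ)..1, (1 - cos (s * θ)) / θ ^ 2 = (θ - sin θ) / θ ^ 3 := by
    rw [intervalIntegral.integral_div, intervalIntegral.integral_sub intervalIntegrable_const
        ((by fun_prop : Continuous fun s => cos (s * θ)).intervalIntegrable _ _),
      intervalIntegral.integral_comp_mul_right cos hθ]
    simp only [zero_mul, one_mul, integral_cos, sin_zero, smul_eq_mul,
      intervalIntegral.integral_const, sub_zero, mul_one]
    field_simp
  simp_rw [exp_smul_eq_of_mul_mul_self_eq hθ hA]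
  rw [intervalIntegral.integral_add ((by fun_prop : Continuous _).intervalIntegrable _ _)
      ((by fun_prop : Continuous _).intervalIntegrable _ _),
    intervalIntegral.integral_add ((by fun_prop : Continuous _).intervalIntegrable _ _)
      ((by fun_prop : Continuous _).intervalIntegrable _ _), intervalIntegral.integral_const,
    intervalIntegral.integral_smul_const, intervalIntegral.integral_smul_const, hsin, hcos]
  simp

end ExpOfCubeRelation

theorem hat_mul_hat_mul_hat (ω : EuclideanSpace ℝ (Fin 3)) :
    hat ω * hat ω * hat ω = -‖ω‖ ^ 2 • hat ω := by
  rw [EuclideanSpace.norm_sq_eq]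
  ext i j
  fin_cases i <;> fin_cases j <;>
    simp [hat, Matrix.mul_apply, Fin.sum_univ_three] <;> ring

theorem stmt2 (ω : EuclideanSpace ℝ (Fin 3)) (hω : ω ≠ 0) :
    (∫ s in (0:ℝ)..1, exp (s • hat ω)) =
      1 + ((1 - Real.cos ‖ω‖) / ‖ω‖ ^ 2) • hat ω
        + ((‖ω‖ - Real.sin ‖ω‖) / ‖ω‖ ^ 3) • (hat ω * hat ω) :=
  integral_exp_smul_of_mul_mul_self_eq (norm_ne_zero_iff.mpr hω) (hat_mul_hat_mul_hat ω)
end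

section
/- For every ω ∈ ℝ³ and v ∈ ℝ³, the matrix exponential of the se(3) element X(ω,v) has the block form exp(X(ω,v)) = [[exp(hat(ω)), A(hat(ω))·v],[0, 1]], i.e. its top-left 3×3 block equals exp(hat(ω)), its top-right 3×1 block equals (∫₀¹ exp(s·hat(ω)) ds)·v, and its bottom row equals (0,0,0,1). -/
/-! The last row of `X = seX ω v` vanishes, so every power `X ^ k` has the block form
`[[hat ω ^ k, *], [0, 0]]` for `k ≥ 1`; summing the exponential series gives the top-left block
and the last row. For the last column, integrate `d/ds exp (s • X) = exp (s • X) * X` over `[0, 1]`: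
the last column of `exp (s • X) * X` is `exp (s • hat ω) *ᵥ v`. -/

open scoped Matrix
open NormedSpace

attribute [local instance] Matrix.frobeniusNormedAddCommGroup Matrix.frobeniusNormedSpace

/-- The homogeneous 4×4 representation of the se(3) element `(ω, v)`. -/
def seX (ω v : EuclideanSpace ℝ (Fin 3)) : Matrix (Fin 4) (Fin 4) ℝ :=
  Matrix.of fun i j =>
    if hi : (i : ℕ) < 3 then
      if hj : (j : ℕ) < 3 then hat ω ⟨i, hi⟩ ⟨j, hj⟩ else v ⟨i, hi⟩
    else 0

attribute [local instance] Matrix.frobeniusNormedRing Matrix.frobeniusNormedAlgebra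

theorem integral_exp_smul_mul_eq_exp_sub_one {𝔸 : Type*} [NormedRing 𝔸] [NormedAlgebra ℝ 𝔸]
    [CompleteSpace 𝔸] (X : 𝔸) : ∫ s in (0:ℝ)..1, exp (s • X) * X = exp X - 1 := by
  rw [intervalIntegral.integral_eq_sub_of_hasDerivAt (fun s _ => hasDerivAt_exp_smul_const X s)
    (((differentiable_exp_smul_const ℝ X).continuous.mul continuous_const).intervalIntegrable 0 1)]
  simp

namespace Matrix

section Integral

variable {m n : Type*} [Fintype m] [Fintype n] {F : ℝ → Matrix m n ℝ} {a b : ℝ}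

theorem intervalIntegral_apply (hF : Continuous F) (i : m) (j : n) :
    (∫ s in a..b, F s) i j = ∫ s in a..b, F s i j :=
  ((entryLinearMap ℝ ℝ i j).toContinuousLinearMap.intervalIntegral_comp_comm
    (hF.intervalIntegrable a b)).symm

theorem intervalIntegral_mulVec_apply (hF : Continuous F) (v : n → ℝ) (i : m) :
    ((∫ s in a..b, F s) *ᵥ v) i = ∫ s in a..b, (F s *ᵥ v) i :=
  ((ContinuousLinearMap.proj i).comp ((mulVec.addMonoidHomLeft v).toRealLinearMap
    (continuous_id.matrix_mulVec continuous_const)) |>.intervalIntegral_comp_comm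
      (hF.intervalIntegrable a b)).symm

end Integral

theorem hasSum_exp_apply {ι : Type*} [Fintype ι] [DecidableEq ι] (M : Matrix ι ι ℝ) (i j : ι) :
    HasSum (fun k => (k.factorial : ℝ)⁻¹ * (M ^ k) i j) (exp M i j) :=
  Pi.hasSum.mp (Pi.hasSum.mp (exp_series_hasSum_exp' (𝕂 := ℝ) M) i) j

section LastRowZero

variable {n : ℕ}

theorem pow_succ_apply_last {R : Type*} [Semiring R] {M : Matrix (Fin (n + 1)) (Fin (n + 1)) R}
    (hM : ∀ j, M (Fin.last n) j = 0) (k : ℕ) (j : Fin (n + 1)) :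
    (M ^ (k + 1)) (Fin.last n) j = 0 := by
  simp [pow_succ', mul_apply, hM]

theorem pow_apply_castSucc_castSucc {R : Type*} [Semiring R]
    {M : Matrix (Fin (n + 1)) (Fin (n + 1)) R} (hM : ∀ j, M (Fin.last n) j = 0) (k : ℕ)
    (i j : Fin n) :
    (M ^ k) i.castSucc j.castSucc = (M.submatrix Fin.castSucc Fin.castSucc ^ k) i j := by
  induction k generalizing j with
  | zero => simp [one_apply]
  | succ k ih => simp [pow_succ, mul_apply, Fin.sum_univ_castSucc, hM, ih]

variable {M : Matrix (Fin (n + 1)) (Fin (n + 1)) ℝ}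

theorem exp_apply_castSucc_castSucc (hM : ∀ j, M (Fin.last n) j = 0) (i j : Fin n) :
    exp M i.castSucc j.castSucc = exp (M.submatrix Fin.castSucc Fin.castSucc) i j :=
  (hasSum_exp_apply M _ _).unique <| by
    simpa only [pow_apply_castSucc_castSucc hM] using hasSum_exp_apply _ i j

theorem exp_apply_last (hM : ∀ j, M (Fin.last n) j = 0) (j : Fin (n + 1)) :
    exp M (Fin.last n) j = (1 : Matrix (Fin (n + 1)) (Fin (n + 1)) ℝ) (Fin.last n) j := by
  refine (hasSum_exp_apply M _ j).unique ?_
  convert hasSum_single 0 fun k hk => ?_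
  · simp
  · obtain ⟨k, rfl⟩ := Nat.exists_eq_succ_of_ne_zero hk
    simp [pow_succ_apply_last hM]

theorem exp_apply_castSucc_last (hM : ∀ j, M (Fin.last n) j = 0) (i : Fin n) :
    exp M i.castSucc (Fin.last n) =
      ((∫ s in (0:ℝ)..1, exp (s • M.submatrix Fin.castSucc Fin.castSucc)) *ᵥ
        fun k => M k.castSucc (Fin.last n)) i := by
  set A := M.submatrix Fin.castSucc Fin.castSucc
  have hsM (s : ℝ) (j : Fin (n + 1)) : (s • M) (Fin.last n) j = 0 := by simp [hM]
  have hcol (s : ℝ) : (exp (s • M) * M) i.castSucc (Fin.last n) =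
      (exp (s • A) *ᵥ fun k => M k.castSucc (Fin.last n)) i := by
    simp [mul_apply, Fin.sum_univ_castSucc, hM, exp_apply_castSucc_castSucc (hsM s), A,
      submatrix_smul, mulVec, dotProduct]
  have hcont : Continuous fun s : ℝ => exp (s • M) * M :=
    (differentiable_exp_smul_const ℝ M).continuous.mul continuous_const
  calc exp M i.castSucc (Fin.last n)
      = (exp M - 1) i.castSucc (Fin.last n) := by
        rw [sub_apply, one_apply_ne (Fin.castSucc_lt_last i).ne, sub_zero]
    _ = (∫ s in (0:ℝ)..1, exp (s • M) * M) i.castSucc (Fin.last n) :=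
        congrArg (· i.castSucc (Fin.last n)) (integral_exp_smul_mul_eq_exp_sub_one M).symm
    _ = ∫ s in (0:ℝ)..1, (exp (s • M) * M) i.castSucc (Fin.last n) :=
        intervalIntegral_apply hcont _ _
    _ = _ := by
        simp only [hcol]
        exact (intervalIntegral_mulVec_apply (differentiable_exp_smul_const ℝ A).continuous _ i).symm

end LastRowZero

end Matrix

theorem seX_last (ω v : EuclideanSpace ℝ (Fin 3)) (j : Fin 4) : seX ω v (Fin.last 3) j = 0 := by
  simp [seX]

theorem seX_submatrix_castSucc (ω v : EuclideanSpace ℝ (Fin 3)) :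
    (seX ω v).submatrix Fin.castSucc Fin.castSucc = hat ω := by
  ext i j
  simp [seX]

theorem seX_castSucc_last (ω v : EuclideanSpace ℝ (Fin 3)) :
    (fun k => seX ω v k.castSucc (Fin.last 3)) = ⇑v := by
  ext k
  simp [seX]

theorem stmt3 (ω v : EuclideanSpace ℝ (Fin 3)) :
    (∀ i j : Fin 3, exp (seX ω v) i.castSucc j.castSucc = exp (hat ω) i j) ∧
    (∀ i : Fin 3, exp (seX ω v) i.castSucc (Fin.last 3) =
      ((∫ s in (0:ℝ)..1, exp (s • hat ω)) *ᵥ ⇑v) i) ∧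
    (∀ j : Fin 3, exp (seX ω v) (Fin.last 3) j.castSucc = 0) ∧
    exp (seX ω v) (Fin.last 3) (Fin.last 3) = 1 := by
  have hX := seX_last ω v
  refine ⟨fun i j => ?_, fun i => ?_, fun j => ?_, ?_⟩
  · rw [Matrix.exp_apply_castSucc_castSucc hX, seX_submatrix_castSucc]
  · rw [Matrix.exp_apply_castSucc_last hX, seX_submatrix_castSucc, seX_castSucc_last]
  · rw [Matrix.exp_apply_last hX, Matrix.one_apply_ne (Fin.castSucc_lt_last j).ne']
  · rw [Matrix.exp_apply_last hX, Matrix.one_apply_eq]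
end

section
/- Let R ≥ 0 and let θ = (ω,v) ∈ ℝ³×ℝ³ satisfy √(‖ω‖² + ‖v‖²) ≤ R. Then the matrix exponential of the se(3) element X(ω,v) satisfies ‖exp(X(ω,v))‖_op ≤ 1 + R, where ‖·‖_op is the ℓ²→ℓ² operator norm on 4×4 real matrices. -/
/-!
Let `p = 1 - E` with `E` the matrix unit at the last diagonal entry, the projection onto
`ℝ³ × {0}`. This subspace contains the range of `X = X(ω, v)`, and `X p = X(ω, 0)` is
skew-symmetric, so `exp X` agrees on it with the rotation `exp (X p)`, which fixes the last basis
vector. Hence `exp X = exp (X p) + (exp X - 1) (1 - p)`, where `‖exp (X p)‖ ≤ 1`. Along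
`s ↦ exp (s X) (1 - p)` the derivative is `exp (s X) X (1 - p) = exp (s X p) X (1 - p)`, of norm
at most `‖X (1 - p)‖ = ‖X(0, v)‖ ≤ ‖v‖`, so the mean value inequality bounds the second term
by `‖v‖ ≤ R`.
-/

open scoped Matrix
open NormedSpace

/-- ℓ²→ℓ² operator norm of a real matrix. -/
noncomputable def opNorm {m n : ℕ} (A : Matrix (Fin m) (Fin n) ℝ) : ℝ :=
  ‖LinearMap.toContinuousLinearMap (Matrix.toEuclideanLin A)‖

section ExpBound

variable {𝔸 : Type*} [NormedRing 𝔸] [NormedAlgebra ℝ 𝔸] [CompleteSpace 𝔸]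

theorem norm_exp_le_one_of_mem_skewAdjoint [StarRing 𝔸] [CStarRing 𝔸] {d : 𝔸}
    (hd : d ∈ skewAdjoint 𝔸) : ‖exp d‖ ≤ 1 := by
  nontriviality 𝔸
  let +nondep : NormedAlgebra ℚ 𝔸 := .restrictScalars ℚ ℝ 𝔸
  exact (CStarRing.norm_of_mem_unitary (exp_mem_unitary_of_mem_skewAdjoint hd)).le

theorem exp_mul_eq_exp_mul_mul_of_mul_eq {p x : 𝔸} (hp : IsIdempotentElem p) (hpx : p * x = x) :
    exp x * p = exp (x * p) * p := by
  let +nondep : NormedAlgebra ℚ 𝔸 := .restrictScalars ℚ ℝ 𝔸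
  have hd : p * (x * p) = x * p := by rw [← mul_assoc, hpx]
  have hsemi : SemiconjBy p (x * p) x := hd
  have hcomm : Commute p (x * p) := by rw [Commute, SemiconjBy, hd, mul_assoc, hp.eq]
  rw [← hsemi.exp_right.eq, hcomm.exp_right.eq]

theorem exp_mul_mul_one_sub_eq {p : 𝔸} (x : 𝔸) (hp : IsIdempotentElem p) :
    exp (x * p) * (1 - p) = 1 - p := by
  let +nondep : NormedAlgebra ℚ 𝔸 := .restrictScalars ℚ ℝ 𝔸
  have hsemi : SemiconjBy (1 - p) 0 (x * p) := by
    rw [SemiconjBy, mul_zero, mul_sub, mul_one, mul_assoc, hp.eq, sub_self]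
  simpa only [SemiconjBy, exp_zero, mul_one] using hsemi.exp_right.eq.symm

variable [StarRing 𝔸] [CStarRing 𝔸] [StarModule ℝ 𝔸]

theorem norm_exp_sub_one_mul_one_sub_le {p x : 𝔸} (hp : IsIdempotentElem p) (hpx : p * x = x)
    (hskew : x * p ∈ skewAdjoint 𝔸) : ‖(exp x - 1) * (1 - p)‖ ≤ ‖x * (1 - p)‖ := by
  have hderiv (s : ℝ) : HasDerivAt (fun s : ℝ => exp (s • x) * (1 - p))
      (exp (s • x) * x * (1 - p)) s :=
    (hasDerivAt_exp_smul_const x s).mul_const _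
  have hbound (s : ℝ) : ‖exp (s • x) * x * (1 - p)‖ ≤ ‖x * (1 - p)‖ := by
    have hpsx : p * (s • x) = s • x := by rw [mul_smul_comm, hpx]
    have hrestrict : exp (s • x) * x = exp (s • (x * p)) * x :=
      calc exp (s • x) * x = exp (s • x) * p * x := by rw [mul_assoc, hpx]
        _ = exp (s • (x * p)) * x := by
          rw [exp_mul_eq_exp_mul_mul_of_mul_eq hp hpsx, smul_mul_assoc, mul_assoc, hpx]
    calc ‖exp (s • x) * x * (1 - p)‖
        = ‖exp (s • (x * p)) * (x * (1 - p))‖ := by rw [hrestrict, mul_assoc]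
      _ ≤ ‖exp (s • (x * p))‖ * ‖x * (1 - p)‖ := norm_mul_le _ _
      _ ≤ ‖x * (1 - p)‖ :=
          mul_le_of_le_one_left (norm_nonneg _)
            (norm_exp_le_one_of_mem_skewAdjoint (skewAdjoint.smul_mem s hskew))
  have := norm_image_sub_le_of_norm_deriv_le_segment_01'
    (fun s _ => (hderiv s).hasDerivWithinAt) (fun s _ => hbound s)
  simpa only [one_smul, zero_smul, exp_zero, sub_mul] using this

theorem norm_exp_le_one_add_norm_mul_one_sub {p x : 𝔸} (hp : IsIdempotentElem p)
    (hpx : p * x = x) (hskew : x * p ∈ skewAdjoint 𝔸) : ‖exp x‖ ≤ 1 + ‖x * (1 - p)‖ := by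
  have hsplit : exp x = exp (x * p) + (exp x - 1) * (1 - p) :=
    calc exp x = exp x * p + exp x * (1 - p) := by noncomm_ring
      _ = exp (x * p) * p + exp (x * p) * (1 - p) - (1 - p) + exp x * (1 - p) := by
          rw [exp_mul_eq_exp_mul_mul_of_mul_eq hp hpx, exp_mul_mul_one_sub_eq x hp]; abel
      _ = exp (x * p) + (exp x - 1) * (1 - p) := by noncomm_ring
  calc ‖exp x‖ ≤ ‖exp (x * p)‖ + ‖(exp x - 1) * (1 - p)‖ := by
        conv_lhs => rw [hsplit]
        exact norm_add_le _ _
    _ ≤ 1 + ‖x * (1 - p)‖ :=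
        add_le_add (norm_exp_le_one_of_mem_skewAdjoint hskew)
          (norm_exp_sub_one_mul_one_sub_le hp hpx hskew)

end ExpBound

open scoped Matrix.Norms.L2Operator

theorem single_mul_seX (ω v : EuclideanSpace ℝ (Fin 3)) : Matrix.single 3 3 1 * seX ω v = 0 := by
  ext i j
  fin_cases i <;> fin_cases j <;> simp [seX, Matrix.mul_apply, Fin.sum_univ_four]

theorem seX_mul_single (ω v : EuclideanSpace ℝ (Fin 3)) :
    seX ω v * Matrix.single 3 3 1 = seX 0 v := by
  ext i j
  fin_cases i <;> fin_cases j <;> simp [seX, hat, Matrix.mul_apply, Fin.sum_univ_four]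

theorem seX_mul_one_sub_single (ω v : EuclideanSpace ℝ (Fin 3)) :
    seX ω v * (1 - Matrix.single 3 3 1) = seX ω 0 := by
  ext i j
  fin_cases i <;> fin_cases j <;> simp [seX, hat, Matrix.mul_apply, Fin.sum_univ_four]

theorem seX_zero_right_mem_skewAdjoint (ω : EuclideanSpace ℝ (Fin 3)) :
    seX ω 0 ∈ skewAdjoint (Matrix (Fin 4) (Fin 4) ℝ) := by
  rw [skewAdjoint.mem_iff]
  ext i j
  fin_cases i <;> fin_cases j <;> simp [seX, hat]

theorem norm_toEuclideanCLM_seX_zero_left_apply (v : EuclideanSpace ℝ (Fin 3))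
    (u : EuclideanSpace ℝ (Fin 4)) :
    ‖Matrix.toEuclideanCLM (𝕜 := ℝ) (seX 0 v) u‖ = |u 3| * ‖v‖ := by
  rw [EuclideanSpace.norm_eq, EuclideanSpace.norm_eq, ← Real.sqrt_sq (abs_nonneg (u 3)),
    ← Real.sqrt_mul (sq_nonneg _)]
  congr 1
  simp [Fin.sum_univ_four, Fin.sum_univ_three, seX, hat, Matrix.mulVec, dotProduct, mul_pow,
    add_mul, mul_comm]

theorem l2_opNorm_seX_zero_left_le (v : EuclideanSpace ℝ (Fin 3)) : ‖seX 0 v‖ ≤ ‖v‖ := by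
  rw [Matrix.cstar_norm_def]
  refine ContinuousLinearMap.opNorm_le_bound _ (norm_nonneg v) fun u => ?_
  rw [norm_toEuclideanCLM_seX_zero_left_apply, mul_comm]
  gcongr
  exact PiLp.norm_apply_le u 3

theorem stmt5_general (R : ℝ) (ω v : EuclideanSpace ℝ (Fin 3))
    (hθ : Real.sqrt (‖ω‖ ^ 2 + ‖v‖ ^ 2) ≤ R) :
    opNorm (exp (seX ω v)) ≤ 1 + R := by
  have hv : ‖v‖ ≤ R :=
    (Real.le_sqrt_of_sq_le (le_add_of_nonneg_left (sq_nonneg ‖ω‖))).trans hθ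
  have hp : IsIdempotentElem (1 - Matrix.single 3 3 1 : Matrix (Fin 4) (Fin 4) ℝ) :=
    IsIdempotentElem.one_sub (by simp [IsIdempotentElem, Matrix.single_mul_single_same])
  have hpX : (1 - Matrix.single 3 3 1) * seX ω v = seX ω v := by
    rw [sub_mul, one_mul, single_mul_seX, sub_zero]
  calc opNorm (exp (seX ω v)) = ‖exp (seX ω v)‖ := rfl
    _ ≤ 1 + ‖seX ω v * (1 - (1 - Matrix.single 3 3 1))‖ :=
      norm_exp_le_one_add_norm_mul_one_sub hp hpX
        (seX_mul_one_sub_single ω v ▸ seX_zero_right_mem_skewAdjoint ω)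
    _ = 1 + ‖seX 0 v‖ := by rw [sub_sub_cancel, seX_mul_single]
    _ ≤ 1 + R := by gcongr; exact (l2_opNorm_seX_zero_left_le v).trans hv

theorem stmt5 (R : ℝ) (hR : 0 ≤ R) (ω v : EuclideanSpace ℝ (Fin 3))
    (hθ : Real.sqrt (‖ω‖ ^ 2 + ‖v‖ ^ 2) ≤ R) :
    opNorm (exp (seX ω v)) ≤ 1 + R :=
  stmt5_general R ω v hθ
end

section
/- Let Ω be a 3×3 real skew-symmetric matrix and let H be any 3×3 real matrix. Then the Fréchet derivative of the matrix exponential at Ω satisfies ‖D exp_Ω[H]‖_F ≤ ‖H‖_F, i.e. the Fréchet derivative of exp restricted to the point Ω has operator norm at most 1 with respect to the Frobenius norm. -/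
/-!
Differentiating Duhamel's formula
`exp B - exp A = ∫₀¹ exp ((1 - s) A) (B - A) exp (s B) ds` along `B = Ω + t H` gives
`D exp_Ω[H] = ∫₀¹ exp ((1 - s) Ω) H exp (s Ω) ds`. For skew-adjoint `Ω` both exponential
factors are unitary, and multiplication by a unitary matrix on either side preserves the
Frobenius norm, so the integrand has norm `‖H‖` for every `s`.
-/

open scoped Matrix
open NormedSpace

attribute [local instance] Matrix.frobeniusNormedAddCommGroup Matrix.frobeniusNormedSpace

section DuhamelFormula

variable {𝔸 : Type*} [NormedRing 𝔸] [NormedAlgebra ℝ 𝔸] [CompleteSpace 𝔸]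

theorem exp_sub_exp_eq_intervalIntegral (A B : 𝔸) :
    exp B - exp A = ∫ s in (0 : ℝ)..1, exp ((1 - s) • A) * (B - A) * exp (s • B) := by
  have hderiv : ∀ s ∈ Set.uIcc (0 : ℝ) 1,
      HasDerivAt (fun s : ℝ ↦ exp ((1 - s) • A) * exp (s • B))
        (exp ((1 - s) • A) * (B - A) * exp (s • B)) s := by
    intro s _
    have hleft := (hasDerivAt_exp_smul_const A (1 - s)).scomp s ((hasDerivAt_id s).const_sub 1)
    convert hleft.mul (hasDerivAt_exp_smul_const' B s) using 1
    · rfl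
    · rw [Function.comp_apply, neg_one_smul]
      noncomm_ring
  let : NormedAlgebra ℚ 𝔸 := .restrictScalars ℚ ℝ 𝔸
  rw [intervalIntegral.integral_eq_sub_of_hasDerivAt hderiv
    ((by fun_prop : Continuous _).intervalIntegrable 0 1)]
  simp

theorem fderiv_exp_apply_eq_intervalIntegral (A H : 𝔸) :
    fderiv ℝ exp A H = ∫ s in (0 : ℝ)..1, exp ((1 - s) • A) * H * exp (s • A) := by
  set F : ℝ → 𝔸 := fun t ↦
    ∫ s in (0 : ℝ)..1, exp ((1 - s) • A) * H * exp (s • (A + t • H))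
  let : NormedAlgebra ℚ 𝔸 := .restrictScalars ℚ ℝ 𝔸
  have hF : Continuous F := by
    apply intervalIntegral.continuous_parametric_intervalIntegral_of_continuous' _ 0 1
    fun_prop
  have hline : HasDerivAt (fun t : ℝ ↦ exp (A + t • H)) (fderiv ℝ exp A H) 0 := by
    have := ((hasDerivAt_id (0 : ℝ)).smul_const H).const_add A
    simp only [id, one_smul] at this
    refine HasFDerivAt.comp_hasDerivAt_of_eq 0
      (exp_analytic (𝕂 := ℝ) A).differentiableAt.hasFDerivAt this ?_
    simp
  have hslope : ∀ t ≠ (0 : ℝ), slope (fun t : ℝ ↦ exp (A + t • H)) 0 t = F t := by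
    intro t ht
    rw [slope_def_module, zero_smul, add_zero, sub_zero, exp_sub_exp_eq_intervalIntegral,
      ← intervalIntegral.integral_smul]
    congr 1 with s
    rw [add_sub_cancel_left, mul_smul_comm, smul_mul_assoc, smul_smul, inv_mul_cancel₀ ht,
      one_smul]
  refine tendsto_nhds_unique (hasDerivAt_iff_tendsto_slope.mp hline) ?_
  convert (hF.tendsto 0).mono_left nhdsWithin_le_nhds |>.congr' ?_ using 2
  · simp [F]
  · filter_upwards [self_mem_nhdsWithin] with t ht using (hslope t ht).symm

end DuhamelFormula

namespace Matrix

variable {𝕜 m n : Type*} [RCLike 𝕜] [Fintype m] [Fintype n]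

theorem frobenius_norm_sq_eq_re_trace (A : Matrix m n 𝕜) :
    ‖A‖ ^ 2 = RCLike.re (Aᴴ * A).trace := by
  rw [frobenius_norm_def, ← Real.rpow_natCast, ← Real.rpow_mul (by positivity)]
  norm_num [trace, mul_apply, RCLike.conj_mul, Finset.sum_comm (γ := m)]

variable [DecidableEq m]

theorem frobenius_norm_unitary_mul {U : Matrix m m 𝕜} (hU : U ∈ unitary (Matrix m m 𝕜))
    (A : Matrix m n 𝕜) : ‖U * A‖ = ‖A‖ := by
  rw [← sq_eq_sq₀ (norm_nonneg _) (norm_nonneg _), frobenius_norm_sq_eq_re_trace,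
    frobenius_norm_sq_eq_re_trace, conjTranspose_mul, Matrix.mul_assoc, ← Matrix.mul_assoc Uᴴ,
    ← star_eq_conjTranspose, Unitary.star_mul_self_of_mem hU, Matrix.one_mul]

theorem frobenius_norm_mul_unitary {U : Matrix m m 𝕜} (hU : U ∈ unitary (Matrix m m 𝕜))
    (A : Matrix n m 𝕜) : ‖A * U‖ = ‖A‖ := by
  rw [← frobenius_norm_conjTranspose, conjTranspose_mul, ← star_eq_conjTranspose,
    frobenius_norm_unitary_mul (Unitary.star_mem hU), frobenius_norm_conjTranspose]

attribute [local instance] frobeniusNormedRing frobeniusNormedAlgebra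

theorem frobenius_norm_fderiv_exp_apply_le {Ω : Matrix m m 𝕜}
    (hΩ : Ω ∈ skewAdjoint (Matrix m m 𝕜)) (H : Matrix m m 𝕜) :
    ‖fderiv ℝ exp Ω H‖ ≤ ‖H‖ := by
  have hunitary (s : ℝ) : exp (s • Ω) ∈ unitary (Matrix m m 𝕜) :=
    exp_mem_unitary_of_mem_skewAdjoint (skewAdjoint.smul_mem s hΩ)
  calc ‖fderiv ℝ exp Ω H‖
        = ‖∫ s in (0 : ℝ)..1, exp ((1 - s) • Ω) * H * exp (s • Ω)‖ :=
          congrArg norm (fderiv_exp_apply_eq_intervalIntegral Ω H)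
    _ ≤ ‖H‖ * |1 - 0| :=
      intervalIntegral.norm_integral_le_of_norm_le_const fun s _ ↦
        ((frobenius_norm_mul_unitary (hunitary s) _).trans
          (frobenius_norm_unitary_mul (hunitary (1 - s)) H)).le
    _ = ‖H‖ := by norm_num

end Matrix

theorem stmt7 (Ω : Matrix (Fin 3) (Fin 3) ℝ) (hΩ : Ωᵀ = -Ω)
    (H : Matrix (Fin 3) (Fin 3) ℝ) :
    ‖fderiv ℝ (exp : Matrix (Fin 3) (Fin 3) ℝ → Matrix (Fin 3) (Fin 3) ℝ) Ω H‖ ≤ ‖H‖ := by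
  refine Matrix.frobenius_norm_fderiv_exp_apply_le ?_ H
  rwa [skewAdjoint.mem_iff, Matrix.star_eq_conjTranspose,
    Matrix.conjTranspose_eq_transpose_of_trivial]
end
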